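/- Let V be an isometric colligation on ℂ ⊕ (⊕ᵢ₌₁ⁿ (Mᵢ ⊕ Nᵢ)) satisfying property F(n), with top-left entry a = τ_V(0) ≠ 0 and block entries Bᵢ = [Bᵢ(1), Bᵢ(2)], Cᵢ = [Cᵢ(1); Cᵢ(2)], Dᵢⱼ = [[Dᵢⱼ(1), (1/a)Cᵢ(1)Bⱼ(2)],[0, Dᵢⱼ(2)]]. Set B(k) = [B₁(k), …, Bₙ(k)], C(k) = [C₁(k); …; Cₙ(k)] and D(k) = [Dᵢⱼ(k)]ᵢⱼ for k = 1, 2, and let α and β be non-zero scalars satisfying |β|² = |a|² + ‖C(1)‖² and α = a/β. Then V₁ = [[α, B(1)],[(1/β)C(1), D(1)]] is an isometric colligation on ℂ ⊕ (M₁ ⊕ ⋯ ⊕ Mₙ), V₂ = [[β, (1/α)B(2)],[C(2), D(2)]] is an isometric colligation on ℂ ⊕ (N₁ ⊕ ⋯ ⊕ Nₙ), and τ_V(z) = τ_{V₁}(z) · τ_{V₂}(z) for all z ∈ 𝔻ⁿ. -/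

import Mathlib

open ContinuousLinearMap Metric

set_option synthInstance.maxHeartbeats 1000000
set_option maxHeartbeats 1000000
set_option linter.unusedSectionVars false

noncomputable section

/-- One-variable Schur class: analytic on the open unit disc, bounded by one. -/
def SchurClass (f : ℂ → ℂ) : Prop :=
  AnalyticOnNhd ℂ f (ball 0 1) ∧ ∀ z ∈ ball (0 : ℂ) 1, ‖f z‖ ≤ 1

/-- The open unit bidisc as a subset of `ℂ × ℂ`. -/
def biDisc : Set (ℂ × ℂ) := (ball 0 1) ×ˢ (ball 0 1)

/-- Two-variable Schur class. -/
def SchurClass2 (f : ℂ × ℂ → ℂ) : Prop :=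
  AnalyticOnNhd ℂ f biDisc ∧ ∀ z ∈ biDisc, ‖f z‖ ≤ 1

/-- The open unit polydisc in `ℂⁿ`. -/
def polyDisc (n : ℕ) : Set (Fin n → ℂ) := {z | ∀ i, ‖z i‖ < 1}

variable {H : Type*} [NormedAddCommGroup H] [InnerProductSpace ℂ H]

/-- `V = [[a, B], [C, D]]` on `ℂ ⊕ H` is an isometric colligation, i.e. `V*V = I`,
expressed as preservation of inner products in the Hilbertian direct sum `ℂ ⊕ H`. -/
def IsIsometricColligation (a : ℂ) (B : H →L[ℂ] ℂ) (C : ℂ →L[ℂ] H) (D : H →L[ℂ] H) : Prop :=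
  ∀ (z w : ℂ) (h k : H),
    (starRingEnd ℂ) (a * z + B h) * (a * w + B k) + (inner ℂ (C z + D h) (C w + D k) : ℂ) =
      (starRingEnd ℂ) z * w + (inner ℂ h k : ℂ)

/-- One-variable transfer function `τ_V(z) = a + z B (I - z D)⁻¹ C`. -/
def transfer1 (a : ℂ) (B : H →L[ℂ] ℂ) (C : ℂ →L[ℂ] H) (D : H →L[ℂ] H) (z : ℂ) : ℂ :=
  a + z * B (Ring.inverse (1 - z • D) (C 1))

section Pair

variable {H₁ H₂ K₁ K₂ : Type*}
  [NormedAddCommGroup H₁] [InnerProductSpace ℂ H₁]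
  [NormedAddCommGroup H₂] [InnerProductSpace ℂ H₂]
  [NormedAddCommGroup K₁] [InnerProductSpace ℂ K₁]
  [NormedAddCommGroup K₂] [InnerProductSpace ℂ K₂]

/-- Row operator `[B₁, B₂] : H₁ ⊕ H₂ → ℂ`. -/
def rowB (B₁ : H₁ →L[ℂ] ℂ) (B₂ : H₂ →L[ℂ] ℂ) : WithLp 2 (H₁ × H₂) →L[ℂ] ℂ :=
  (B₁.comp (fst ℂ H₁ H₂) + B₂.comp (snd ℂ H₁ H₂)).comp
    (WithLp.prodContinuousLinearEquiv 2 ℂ H₁ H₂).toContinuousLinearMap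

/-- Column operator `[C₁; C₂] : ℂ → H₁ ⊕ H₂`. -/
def colC (C₁ : ℂ →L[ℂ] H₁) (C₂ : ℂ →L[ℂ] H₂) : ℂ →L[ℂ] WithLp 2 (H₁ × H₂) :=
  ((WithLp.prodContinuousLinearEquiv 2 ℂ H₁ H₂).symm.toContinuousLinearMap).comp (C₁.prod C₂)

/-- Block operator `[[D₁₁, D₁₂], [D₂₁, D₂₂]] : K₁ ⊕ K₂ → H₁ ⊕ H₂`. -/
def blockD (D₁₁ : K₁ →L[ℂ] H₁) (D₁₂ : K₂ →L[ℂ] H₁) (D₂₁ : K₁ →L[ℂ] H₂) (D₂₂ : K₂ →L[ℂ] H₂) :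
    WithLp 2 (K₁ × K₂) →L[ℂ] WithLp 2 (H₁ × H₂) :=
  ((WithLp.prodContinuousLinearEquiv 2 ℂ H₁ H₂).symm.toContinuousLinearMap).comp
    ((((D₁₁.comp (fst ℂ K₁ K₂) + D₁₂.comp (snd ℂ K₁ K₂))).prod
        (D₂₁.comp (fst ℂ K₁ K₂) + D₂₂.comp (snd ℂ K₁ K₂))).comp
      (WithLp.prodContinuousLinearEquiv 2 ℂ K₁ K₂).toContinuousLinearMap)

/-- The diagonal operator `E(z) = z₁ I_{H₁} ⊕ z₂ I_{H₂}` on `H₁ ⊕ H₂`. -/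
def diag2 (z : ℂ × ℂ) : WithLp 2 (H₁ × H₂) →L[ℂ] WithLp 2 (H₁ × H₂) :=
  blockD (z.1 • ContinuousLinearMap.id ℂ H₁) 0 0 (z.2 • ContinuousLinearMap.id ℂ H₂)

/-- Two-variable transfer function `τ_V(z) = a + B (I - E(z) D)⁻¹ E(z) C` on `ℂ ⊕ (H₁ ⊕ H₂)`. -/
def transfer2 (a : ℂ) (B : WithLp 2 (H₁ × H₂) →L[ℂ] ℂ) (C : ℂ →L[ℂ] WithLp 2 (H₁ × H₂))
    (D : WithLp 2 (H₁ × H₂) →L[ℂ] WithLp 2 (H₁ × H₂)) (z : ℂ × ℂ) : ℂ :=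
  a + B (Ring.inverse (1 - (diag2 z).comp D) (diag2 z (C 1)))

end Pair

section Fam

variable {n m k : ℕ} {K : Fin n → Type*} {M : Fin m → Type*} {N : Fin k → Type*}
  [∀ i, NormedAddCommGroup (K i)] [∀ i, InnerProductSpace ℂ (K i)]
  [∀ i, NormedAddCommGroup (M i)] [∀ i, InnerProductSpace ℂ (M i)]
  [∀ i, NormedAddCommGroup (N i)] [∀ i, InnerProductSpace ℂ (N i)]

/-- Row operator `[B₁, …, Bₙ] : ⊕ᵢ Kᵢ → ℂ`. -/
def rowN (B : ∀ i, K i →L[ℂ] ℂ) : PiLp 2 K →L[ℂ] ℂ :=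
  ∑ i, (B i).comp ((ContinuousLinearMap.proj i).comp
    (PiLp.continuousLinearEquiv 2 ℂ K).toContinuousLinearMap)

/-- Column operator `[C₁; …; Cₙ] : ℂ → ⊕ᵢ Kᵢ`. -/
def colN (C : ∀ i, ℂ →L[ℂ] K i) : ℂ →L[ℂ] PiLp 2 K :=
  ((PiLp.continuousLinearEquiv 2 ℂ K).symm.toContinuousLinearMap).comp
    (ContinuousLinearMap.pi C)

/-- Rectangular block-matrix operator `[Dᵢⱼ] : ⊕ⱼ Nⱼ → ⊕ᵢ Mᵢ` (also used for square ones). -/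
def matR (D : ∀ (i : Fin m) (j : Fin k), N j →L[ℂ] M i) : PiLp 2 N →L[ℂ] PiLp 2 M :=
  ((PiLp.continuousLinearEquiv 2 ℂ M).symm.toContinuousLinearMap).comp
    ((ContinuousLinearMap.pi fun i => ∑ j, (D i j).comp (ContinuousLinearMap.proj j)).comp
      (PiLp.continuousLinearEquiv 2 ℂ N).toContinuousLinearMap)

/-- The diagonal operator `E(z) = z₁ I_{K₁} ⊕ ⋯ ⊕ zₙ I_{Kₙ}` on `⊕ᵢ Kᵢ`. -/
def diagN (z : Fin n → ℂ) : PiLp 2 K →L[ℂ] PiLp 2 K :=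
  ((PiLp.continuousLinearEquiv 2 ℂ K).symm.toContinuousLinearMap).comp
    ((ContinuousLinearMap.pi fun i => z i • ContinuousLinearMap.proj i).comp
      (PiLp.continuousLinearEquiv 2 ℂ K).toContinuousLinearMap)

/-- `n`-variable transfer function `τ_V(z) = a + B (I - E(z) D)⁻¹ E(z) C` on `ℂ ⊕ (⊕ᵢ Kᵢ)`. -/
def transferN (a : ℂ) (B : PiLp 2 K →L[ℂ] ℂ) (C : ℂ →L[ℂ] PiLp 2 K)
    (D : PiLp 2 K →L[ℂ] PiLp 2 K) (z : Fin n → ℂ) : ℂ :=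
  a + B (Ring.inverse (1 - (diagN z).comp D) (diagN z (C 1)))

/-- Transfer function of a colligation on `ℂ ⊕ ((⊕ᵢ₌₁ᵐ Mᵢ) ⊕ (⊕ⱼ₌₁ᵏ Nⱼ))` in the `m + k`
variables `(z₁, z₂) ∈ 𝔻^m × 𝔻^k`, where `E(z₁, z₂) = (⊕ᵢ z₁ᵢ I_{Mᵢ}) ⊕ (⊕ⱼ z₂ⱼ I_{Nⱼ})`. -/
def transferSplit (a : ℂ) (B : WithLp 2 (PiLp 2 M × PiLp 2 N) →L[ℂ] ℂ)
    (C : ℂ →L[ℂ] WithLp 2 (PiLp 2 M × PiLp 2 N))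
    (D : WithLp 2 (PiLp 2 M × PiLp 2 N) →L[ℂ] WithLp 2 (PiLp 2 M × PiLp 2 N))
    (z₁ : Fin m → ℂ) (z₂ : Fin k → ℂ) : ℂ :=
  a + B (Ring.inverse (1 - (blockD (diagN z₁) 0 0 (diagN z₂)).comp D)
    (blockD (diagN z₁) 0 0 (diagN z₂) (C 1)))

end Fam

section AuxApply

variable {n : ℕ} {K : Fin n → Type*}
  [∀ i, NormedAddCommGroup (K i)] [∀ i, InnerProductSpace ℂ (K i)]

theorem rowN_apply (B : ∀ i, K i →L[ℂ] ℂ) (v : PiLp 2 K) :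
    rowN B v = ∑ i, B i (v i) := by
  simp [rowN]

theorem colN_apply (C : ∀ i, ℂ →L[ℂ] K i) (c : ℂ) (i : Fin n) :
    colN C c i = C i c := rfl

theorem diagN_apply (z : Fin n → ℂ) (v : PiLp 2 K) (i : Fin n) :
    diagN (K := K) z v i = z i • v i := rfl

variable {m : ℕ} {L : Fin m → Type*}
  [∀ i, NormedAddCommGroup (L i)] [∀ i, InnerProductSpace ℂ (L i)]

theorem matR_apply (D : ∀ (i : Fin n) (j : Fin m), L j →L[ℂ] K i) (v : PiLp 2 L) (i : Fin n) :
    matR D v i = ∑ j, D i j (v j) := by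
  simp [matR]

end AuxApply

section AuxPairApply

variable {H₁ H₂ K₁ K₂ : Type*}
  [NormedAddCommGroup H₁] [InnerProductSpace ℂ H₁]
  [NormedAddCommGroup H₂] [InnerProductSpace ℂ H₂]
  [NormedAddCommGroup K₁] [InnerProductSpace ℂ K₁]
  [NormedAddCommGroup K₂] [InnerProductSpace ℂ K₂]

theorem rowB_apply (B₁ : H₁ →L[ℂ] ℂ) (B₂ : H₂ →L[ℂ] ℂ) (x : WithLp 2 (H₁ × H₂)) :
    rowB B₁ B₂ x = B₁ x.fst + B₂ x.snd := rfl

theorem colC_fst (C₁ : ℂ →L[ℂ] H₁) (C₂ : ℂ →L[ℂ] H₂) (c : ℂ) :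
    (colC C₁ C₂ c).fst = C₁ c := rfl

theorem colC_snd (C₁ : ℂ →L[ℂ] H₁) (C₂ : ℂ →L[ℂ] H₂) (c : ℂ) :
    (colC C₁ C₂ c).snd = C₂ c := rfl

theorem blockD_fst (D₁₁ : K₁ →L[ℂ] H₁) (D₁₂ : K₂ →L[ℂ] H₁) (D₂₁ : K₁ →L[ℂ] H₂)
    (D₂₂ : K₂ →L[ℂ] H₂) (x : WithLp 2 (K₁ × K₂)) :
    (blockD D₁₁ D₁₂ D₂₁ D₂₂ x).fst = D₁₁ x.fst + D₁₂ x.snd := rfl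

theorem blockD_snd (D₁₁ : K₁ →L[ℂ] H₁) (D₁₂ : K₂ →L[ℂ] H₁) (D₂₁ : K₁ →L[ℂ] H₂)
    (D₂₂ : K₂ →L[ℂ] H₂) (x : WithLp 2 (K₁ × K₂)) :
    (blockD D₁₁ D₁₂ D₂₁ D₂₂ x).snd = D₂₁ x.fst + D₂₂ x.snd := rfl

theorem WithLp_fst_sum {ι : Type*} (s : Finset ι) (f : ι → WithLp 2 (H₁ × H₂)) :
    (∑ i ∈ s, f i).fst = ∑ i ∈ s, (f i).fst :=
  map_sum ((fst ℂ H₁ H₂).comp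
    (WithLp.prodContinuousLinearEquiv 2 ℂ H₁ H₂).toContinuousLinearMap) f s

theorem WithLp_snd_sum {ι : Type*} (s : Finset ι) (f : ι → WithLp 2 (H₁ × H₂)) :
    (∑ i ∈ s, f i).snd = ∑ i ∈ s, (f i).snd :=
  map_sum ((snd ℂ H₁ H₂).comp
    (WithLp.prodContinuousLinearEquiv 2 ℂ H₁ H₂).toContinuousLinearMap) f s

end AuxPairApply

section Glue

variable {n : ℕ} {M N : Fin n → Type*}
  [∀ i, NormedAddCommGroup (M i)] [∀ i, InnerProductSpace ℂ (M i)]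
  [∀ i, NormedAddCommGroup (N i)] [∀ i, InnerProductSpace ℂ (N i)]

/-- Glue two families into an element of the `ℓ²`-direct sum of the pairwise sums. -/
def glue (h : PiLp 2 M) (g : PiLp 2 N) : PiLp 2 (fun i => WithLp 2 (M i × N i)) :=
  (WithLp.equiv 2 _).symm fun i => (WithLp.equiv 2 _).symm (h i, g i)

@[simp] theorem glue_apply_fst (h : PiLp 2 M) (g : PiLp 2 N) (i : Fin n) :
    (glue h g i).fst = h i := rfl

@[simp] theorem glue_apply_snd (h : PiLp 2 M) (g : PiLp 2 N) (i : Fin n) :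
    (glue h g i).snd = g i := rfl

theorem glue_add (h h' : PiLp 2 M) (g g' : PiLp 2 N) :
    glue h g + glue h' g' = glue (h + h') (g + g') := rfl

theorem glue_sub (h h' : PiLp 2 M) (g g' : PiLp 2 N) :
    glue h g - glue h' g' = glue (h - h') (g - g') := rfl

theorem inner_glue (h h' : PiLp 2 M) (g g' : PiLp 2 N) :
    (inner ℂ (glue h g) (glue h' g') : ℂ) = (inner ℂ h h' : ℂ) + (inner ℂ g g' : ℂ) := by
  simp [PiLp.inner_apply, WithLp.prod_inner_apply, Finset.sum_add_distrib]

theorem rowN_rowB_glue (P : ∀ i, M i →L[ℂ] ℂ) (Q : ∀ i, N i →L[ℂ] ℂ)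
    (h : PiLp 2 M) (g : PiLp 2 N) :
    rowN (fun i => rowB (P i) (Q i)) (glue h g) = rowN P h + rowN Q g := by
  simp [rowN_apply, rowB_apply, Finset.sum_add_distrib]

theorem colN_colC_glue (P : ∀ i, ℂ →L[ℂ] M i) (Q : ∀ i, ℂ →L[ℂ] N i) (c : ℂ) :
    colN (fun i => colC (P i) (Q i)) c = glue (colN P c) (colN Q c) := rfl

theorem diagN_glue (z : Fin n → ℂ) (h : PiLp 2 M) (g : PiLp 2 N) :
    diagN z (glue h g) = glue (diagN z h) (diagN z g) := rfl

theorem matR_blockD_glue {m : ℕ} {M' N' : Fin m → Type*}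
    [∀ i, NormedAddCommGroup (M' i)] [∀ i, InnerProductSpace ℂ (M' i)]
    [∀ i, NormedAddCommGroup (N' i)] [∀ i, InnerProductSpace ℂ (N' i)]
    (A : ∀ (i : Fin m) (j : Fin n), M j →L[ℂ] M' i)
    (B : ∀ (i : Fin m) (j : Fin n), N j →L[ℂ] M' i)
    (C : ∀ (i : Fin m) (j : Fin n), M j →L[ℂ] N' i)
    (D : ∀ (i : Fin m) (j : Fin n), N j →L[ℂ] N' i)
    (h : PiLp 2 M) (g : PiLp 2 N) :
    matR (fun i j => blockD (A i j) (B i j) (C i j) (D i j)) (glue h g)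
      = glue (matR A h + matR B g) (matR C h + matR D g) := by
  apply (WithLp.equiv 2 _).injective
  funext i
  apply (WithLp.equiv 2 _).injective
  ext
  · simp [matR_apply, WithLp.ofLp_sum, Prod.fst_sum, blockD_fst, Finset.sum_add_distrib, glue]
  · simp [matR_apply, WithLp.ofLp_sum, Prod.snd_sum, blockD_snd, Finset.sum_add_distrib, glue]

theorem matR_zero {m : ℕ} {L : Fin m → Type*}
    [∀ i, NormedAddCommGroup (L i)] [∀ i, InnerProductSpace ℂ (L i)]
    (v : PiLp 2 N) :
    matR (fun i j => (0 : N j →L[ℂ] L i)) v = 0 := by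
  apply (WithLp.equiv 2 _).injective
  funext i
  simp [matR_apply]

theorem matR_rank_one (c : ℂ) (C : ∀ i, ℂ →L[ℂ] M i) (B : ∀ j, N j →L[ℂ] ℂ)
    (g : PiLp 2 N) :
    matR (fun i j => c • ((C i) ∘L (B j))) g = colN C (c * rowN B g) := by
  apply (WithLp.equiv 2 _).injective
  funext i
  simp only [matR_apply, colN_apply, rowN_apply, WithLp.equiv_apply]
  rw [Finset.mul_sum, map_sum]
  congr 1; funext j
  simp only [ContinuousLinearMap.smul_apply, ContinuousLinearMap.comp_apply]
  rw [← map_smul, smul_eq_mul]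

end Glue

section Norms

variable {n : ℕ} {K : Fin n → Type*}
  [∀ i, NormedAddCommGroup (K i)] [∀ i, InnerProductSpace ℂ (K i)]

theorem diagN_opNorm_le (z : Fin n → ℂ) (r : ℝ) (hr : 0 ≤ r) (hz : ∀ i, ‖z i‖ ≤ r) :
    ‖diagN (K := K) z‖ ≤ r := by
  refine opNorm_le_bound _ hr fun v => ?_
  have h1 : ∀ i, ‖diagN (K := K) z v i‖ ^ 2 ≤ r ^ 2 * ‖v i‖ ^ 2 := by
    intro i
    rw [diagN_apply, norm_smul, ← mul_pow r]
    gcongr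
    exact hz i
  rw [PiLp.norm_eq_of_L2, PiLp.norm_eq_of_L2]
  calc Real.sqrt (∑ i, ‖diagN (K := K) z v i‖ ^ 2)
      ≤ Real.sqrt (∑ i, r ^ 2 * ‖v i‖ ^ 2) :=
        Real.sqrt_le_sqrt (Finset.sum_le_sum fun i _ => h1 i)
    _ = r * Real.sqrt (∑ i, ‖v i‖ ^ 2) := by
        rw [← Finset.mul_sum, Real.sqrt_mul (by positivity), Real.sqrt_sq hr]

theorem contraction_of_colligation {H : Type*} [NormedAddCommGroup H] [InnerProductSpace ℂ H]
    {a : ℂ} {B : H →L[ℂ] ℂ} {C : ℂ →L[ℂ] H} {D : H →L[ℂ] H}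
    (hV : IsIsometricColligation a B C D) (h : H) : ‖D h‖ ≤ ‖h‖ := by
  have h0 := hV 0 0 h h
  simp only [mul_zero, zero_add, map_zero, zero_mul, add_zero] at h0
  rw [RCLike.conj_mul, inner_self_eq_norm_sq_to_K, inner_self_eq_norm_sq_to_K] at h0
  have h2 : (‖B h‖ : ℝ) ^ 2 + ‖D h‖ ^ 2 = ‖h‖ ^ 2 := by exact_mod_cast h0
  nlinarith [norm_nonneg (B h), norm_nonneg (D h), norm_nonneg h]

theorem isUnit_one_sub_diag_comp [∀ i, CompleteSpace (K i)]
    (z : Fin n → ℂ) (hz : ∀ i, ‖z i‖ < 1)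
    (D : PiLp 2 K →L[ℂ] PiLp 2 K) (hD : ∀ h, ‖D h‖ ≤ ‖h‖) :
    IsUnit (1 - (diagN (K := K) z).comp D) := by
  set r : NNReal := Finset.univ.sup fun i => ‖z i‖₊ with hr
  have hr1 : (r : ℝ) < 1 := by
    have : r < 1 := by
      rw [hr, Finset.sup_lt_iff (by norm_num : (⊥ : NNReal) < 1)]
      intro i _
      exact_mod_cast hz i
    exact_mod_cast this
  have hle : ∀ i, ‖z i‖ ≤ (r : ℝ) := fun i => by
    exact_mod_cast Finset.le_sup (f := fun i => ‖z i‖₊) (Finset.mem_univ i)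
  haveI : CompleteSpace (PiLp 2 K) := inferInstance
  have hnorm : ‖(diagN (K := K) z).comp D‖ < 1 := by
    calc ‖(diagN (K := K) z).comp D‖ ≤ ‖diagN (K := K) z‖ * ‖D‖ := opNorm_comp_le _ _
      _ ≤ (r : ℝ) * 1 :=
          mul_le_mul (diagN_opNorm_le z r r.coe_nonneg hle)
            (opNorm_le_bound _ zero_le_one (by simpa using hD)) (ContinuousLinearMap.opNorm_nonneg _) r.coe_nonneg
      _ < 1 := by rwa [mul_one]
  have := (Units.oneSub ((diagN (K := K) z).comp D) hnorm).isUnit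
  rwa [Units.val_oneSub] at this

end Norms


set_option maxHeartbeats 1000000

/-- Theorem 3.3 of the paper. Let `V` be an isometric colligation on
`ℂ ⊕ (⊕ᵢ (Mᵢ ⊕ Nᵢ))` satisfying property `F(n)`, with top-left entry `a = τ_V(0) ≠ 0` and
block entries `Bᵢ = [Bᵢ(1), Bᵢ(2)]`, `Cᵢ = [Cᵢ(1); Cᵢ(2)]`,
`Dᵢⱼ = [[Dᵢⱼ(1), (1/a)Cᵢ(1)Bⱼ(2)],[0, Dᵢⱼ(2)]]`. If `α, β` are non-zero scalars with
`|β|² = |a|² + ‖C(1)‖²` and `α = a/β`, then `V₁ = [[α, B(1)],[(1/β)C(1), D(1)]]` and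
`V₂ = [[β, (1/α)B(2)],[C(2), D(2)]]` are isometric colligations and `τ_V = τ_{V₁} τ_{V₂}`
on the polydisc. -/
theorem isometric_colligation_Fn_factors
    {n : ℕ} {M N : Fin n → Type*}
    [∀ i, NormedAddCommGroup (M i)] [∀ i, InnerProductSpace ℂ (M i)] [∀ i, CompleteSpace (M i)]
    [∀ i, NormedAddCommGroup (N i)] [∀ i, InnerProductSpace ℂ (N i)] [∀ i, CompleteSpace (N i)]
    (a α β : ℂ) (ha : a ≠ 0) (hα : α ≠ 0) (hβ : β ≠ 0)
    (B1 : ∀ i, M i →L[ℂ] ℂ) (B2 : ∀ i, N i →L[ℂ] ℂ)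
    (C1 : ∀ i, ℂ →L[ℂ] M i) (C2 : ∀ i, ℂ →L[ℂ] N i)
    (D1 : ∀ i j, M j →L[ℂ] M i) (D2 : ∀ i j, N j →L[ℂ] N i)
    (hV : IsIsometricColligation a
      (rowN fun i => rowB (B1 i) (B2 i))
      (colN fun i => colC (C1 i) (C2 i))
      (matR fun i j => blockD (D1 i j) (a⁻¹ • ((C1 i) ∘L (B2 j))) 0 (D2 i j)))
    (hβ2 : ‖β‖ ^ 2 = ‖a‖ ^ 2 + ‖(colN C1) 1‖ ^ 2) (hαβ : α = a / β) :
    IsIsometricColligation α (rowN B1) (β⁻¹ • colN C1) (matR D1) ∧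
      IsIsometricColligation β (α⁻¹ • rowN B2) (colN C2) (matR D2) ∧
      ∀ z ∈ polyDisc n,
        transferN a
            (rowN fun i => rowB (B1 i) (B2 i))
            (colN fun i => colC (C1 i) (C2 i))
            (matR fun i j => blockD (D1 i j) (a⁻¹ • ((C1 i) ∘L (B2 j))) 0 (D2 i j)) z =
          transferN α (rowN B1) (β⁻¹ • colN C1) (matR D1) z *
            transferN β (α⁻¹ • rowN B2) (colN C2) (matR D2) z := by
  classical
  have hac : (starRingEnd ℂ) a ≠ 0 := by
    simpa using ha
  have hβc : (starRingEnd ℂ) β ≠ 0 := by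
    simpa using hβ
  have hCC1s : ∀ c : ℂ, colN C1 c = c • colN C1 1 := fun c => by
    rw [← map_smul, smul_eq_mul, mul_one]
  have hCC2s : ∀ c : ℂ, colN C2 c = c • colN C2 1 := fun c => by
    rw [← map_smul, smul_eq_mul, mul_one]
  have hDbg : ∀ (h : PiLp 2 M) (g : PiLp 2 N),
      matR (fun i j => blockD (D1 i j) (a⁻¹ • ((C1 i) ∘L (B2 j))) 0 (D2 i j)) (glue h g)
        = glue (matR D1 h + (a⁻¹ * rowN B2 g) • colN C1 1) (matR D2 g) := by
    intro h g
    calc matR (fun i j => blockD (D1 i j) (a⁻¹ • ((C1 i) ∘L (B2 j))) 0 (D2 i j)) (glue h g)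
        = glue (matR D1 h + matR (fun i j => a⁻¹ • ((C1 i) ∘L (B2 j))) g)
            (matR (fun i j => (0 : M j →L[ℂ] N i)) h + matR D2 g) :=
          matR_blockD_glue _ _ _ _ h g
      _ = _ := by rw [matR_rank_one, matR_zero, zero_add, hCC1s]
  have hBbg : ∀ (h : PiLp 2 M) (g : PiLp 2 N),
      rowN (fun i => rowB (B1 i) (B2 i)) (glue h g) = rowN B1 h + rowN B2 g :=
    rowN_rowB_glue B1 B2
  have hCcg : ∀ c : ℂ, colN (fun i => colC (C1 i) (C2 i)) c = glue (colN C1 c) (colN C2 c) :=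
    colN_colC_glue C1 C2
  -- component identities coming from the isometry hypothesis
  have F1 : (starRingEnd ℂ) a * a + (inner ℂ (colN C1 1) (colN C1 1) : ℂ)
      + (inner ℂ (colN C2 1) (colN C2 1) : ℂ) = 1 := by
    have h0 := hV 1 1 0 0
    simp only [map_zero, add_zero, mul_one, map_one, one_mul, inner_zero_left,
      inner_zero_right] at h0
    rw [hCcg, inner_glue] at h0
    linear_combination h0
  have F2 : ∀ k : PiLp 2 M, (starRingEnd ℂ) a * rowN B1 k
      + (inner ℂ (colN C1 1) (matR D1 k) : ℂ) = 0 := by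
    intro k
    have h0 := hV 1 0 0 (glue k 0)
    simp only [map_zero, add_zero, zero_add, mul_one, mul_zero, map_one, one_mul,
      inner_zero_left, inner_zero_right] at h0
    rw [hBbg, hDbg, hCcg, inner_glue] at h0
    simp only [map_zero, mul_zero, zero_smul, add_zero, inner_zero_right] at h0
    linear_combination h0
  have F3 : ∀ h : PiLp 2 M, (starRingEnd ℂ) (rowN B1 h) * a
      + (inner ℂ (matR D1 h) (colN C1 1) : ℂ) = 0 := by
    intro h
    have h0 := hV 0 1 (glue h 0) 0
    simp only [map_zero, add_zero, zero_add, mul_one, mul_zero, map_one, one_mul,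
      inner_zero_left, inner_zero_right] at h0
    rw [hBbg, hDbg, hCcg, inner_glue] at h0
    simp only [map_zero, mul_zero, zero_smul, add_zero, inner_zero_left] at h0
    linear_combination h0
  have F4 : ∀ h k : PiLp 2 M, (starRingEnd ℂ) (rowN B1 h) * rowN B1 k
      + (inner ℂ (matR D1 h) (matR D1 k) : ℂ) = (inner ℂ h k : ℂ) := by
    intro h k
    have h0 := hV 0 0 (glue h 0) (glue k 0)
    simp only [map_zero, add_zero, zero_add, mul_zero, zero_mul,
      inner_zero_left, inner_zero_right] at h0
    rw [hBbg, hBbg, hDbg, hDbg, inner_glue, inner_glue] at h0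
    simp only [map_zero, mul_zero, zero_smul, add_zero, inner_zero_left,
      inner_zero_right] at h0
    linear_combination h0
  have F5 : ∀ g : PiLp 2 N, (starRingEnd ℂ) a * rowN B2 g
      + (a⁻¹ * rowN B2 g) * (inner ℂ (colN C1 1) (colN C1 1) : ℂ)
      + (inner ℂ (colN C2 1) (matR D2 g) : ℂ) = 0 := by
    intro g
    have h0 := hV 1 0 0 (glue 0 g)
    simp only [map_zero, add_zero, zero_add, mul_one, mul_zero, map_one, one_mul,
      inner_zero_left, inner_zero_right] at h0
    rw [hBbg, hDbg, hCcg, inner_glue] at h0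
    simp only [map_zero, zero_add, inner_smul_right] at h0
    linear_combination h0
  have F6 : ∀ g : PiLp 2 N, (starRingEnd ℂ) (rowN B2 g) * a
      + (starRingEnd ℂ) (a⁻¹ * rowN B2 g) * (inner ℂ (colN C1 1) (colN C1 1) : ℂ)
      + (inner ℂ (matR D2 g) (colN C2 1) : ℂ) = 0 := by
    intro g
    have h0 := hV 0 1 (glue 0 g) 0
    simp only [map_zero, add_zero, zero_add, mul_one, mul_zero, map_one, one_mul,
      inner_zero_left, inner_zero_right] at h0
    rw [hBbg, hDbg, hCcg, inner_glue] at h0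
    simp only [map_zero, zero_add, inner_smul_left] at h0
    linear_combination h0
  have F7 : ∀ g g' : PiLp 2 N, (starRingEnd ℂ) (rowN B2 g) * rowN B2 g'
      + (starRingEnd ℂ) (a⁻¹ * rowN B2 g) * ((a⁻¹ * rowN B2 g')
          * (inner ℂ (colN C1 1) (colN C1 1) : ℂ))
      + (inner ℂ (matR D2 g) (matR D2 g') : ℂ) = (inner ℂ g g' : ℂ) := by
    intro g g'
    have h0 := hV 0 0 (glue 0 g) (glue 0 g')
    simp only [map_zero, add_zero, zero_add, mul_zero, zero_mul,
      inner_zero_left, inner_zero_right] at h0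
    rw [hBbg, hBbg, hDbg, hDbg, inner_glue, inner_glue] at h0
    simp only [map_zero, zero_add, inner_smul_left, inner_smul_right,
      inner_zero_left, inner_zero_right] at h0
    linear_combination h0
  have hβ2c : (starRingEnd ℂ) β * β
      = (starRingEnd ℂ) a * a + (inner ℂ (colN C1 1) (colN C1 1) : ℂ) := by
    rw [RCLike.conj_mul, RCLike.conj_mul, inner_self_eq_norm_sq_to_K]
    exact_mod_cast hβ2
  have g1 : ∀ (c : ℂ) (k : PiLp 2 M), (inner ℂ (colN C1 c) (matR D1 k) : ℂ)
      = (starRingEnd ℂ) c * (inner ℂ (colN C1 1) (matR D1 k) : ℂ) := fun c k => by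
    rw [hCC1s c, inner_smul_left]
  have g2 : ∀ (h : PiLp 2 M) (c : ℂ), (inner ℂ (matR D1 h) (colN C1 c) : ℂ)
      = c * (inner ℂ (matR D1 h) (colN C1 1) : ℂ) := fun h c => by
    rw [hCC1s c, inner_smul_right]
  have g3 : ∀ (c c' : ℂ), (inner ℂ (colN C1 c) (colN C1 c') : ℂ)
      = (starRingEnd ℂ) c * (c' * (inner ℂ (colN C1 1) (colN C1 1) : ℂ)) := fun c c' => by
    rw [hCC1s c, hCC1s c', inner_smul_left, inner_smul_right]
  have P1 : IsIsometricColligation α (rowN B1) (β⁻¹ • colN C1) (matR D1) := by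
    have e1 : (starRingEnd ℂ) α * α
        + ((starRingEnd ℂ) β)⁻¹ * (β⁻¹ * (inner ℂ (colN C1 1) (colN C1 1) : ℂ)) = 1 := by
      rw [hαβ, map_div₀]
      have hcan : ((starRingEnd ℂ) β)⁻¹ * β⁻¹ * ((starRingEnd ℂ) β * β) = 1 := by
        field_simp
      linear_combination (-(((starRingEnd ℂ) β)⁻¹ * β⁻¹)) * hβ2c + hcan
    have e2 : ∀ k : PiLp 2 M, (starRingEnd ℂ) α * rowN B1 k
        + ((starRingEnd ℂ) β)⁻¹ * (inner ℂ (colN C1 1) (matR D1 k) : ℂ) = 0 := fun k => by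
      rw [hαβ, map_div₀]
      linear_combination ((starRingEnd ℂ) β)⁻¹ * F2 k
    have e3 : ∀ h : PiLp 2 M, (starRingEnd ℂ) (rowN B1 h) * α
        + β⁻¹ * (inner ℂ (matR D1 h) (colN C1 1) : ℂ) = 0 := fun h => by
      rw [hαβ]
      linear_combination β⁻¹ * F3 h
    intro z w h k
    simp only [ContinuousLinearMap.smul_apply, inner_add_left, inner_add_right,
      inner_smul_left, inner_smul_right, map_add, map_mul, map_inv₀]
    rw [g3 z w, g1 z k, g2 h w]
    linear_combination ((starRingEnd ℂ) z * w) * e1 + (starRingEnd ℂ) z * e2 k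
      + w * e3 h + F4 h k
  simp only [map_mul, map_inv₀] at F6 F7
  have g1' : ∀ (c : ℂ) (k : PiLp 2 N), (inner ℂ (colN C2 c) (matR D2 k) : ℂ)
      = (starRingEnd ℂ) c * (inner ℂ (colN C2 1) (matR D2 k) : ℂ) := fun c k => by
    rw [hCC2s c, inner_smul_left]
  have g2' : ∀ (h : PiLp 2 N) (c : ℂ), (inner ℂ (matR D2 h) (colN C2 c) : ℂ)
      = c * (inner ℂ (matR D2 h) (colN C2 1) : ℂ) := fun h c => by
    rw [hCC2s c, inner_smul_right]
  have g3' : ∀ (c c' : ℂ), (inner ℂ (colN C2 c) (colN C2 c') : ℂ)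
      = (starRingEnd ℂ) c * (c' * (inner ℂ (colN C2 1) (colN C2 1) : ℂ)) := fun c c' => by
    rw [hCC2s c, hCC2s c', inner_smul_left, inner_smul_right]
  have hA : a⁻¹ * a = 1 := inv_mul_cancel₀ ha
  have hA' : ((starRingEnd ℂ) a)⁻¹ * (starRingEnd ℂ) a = 1 := inv_mul_cancel₀ hac
  have hAA : ((starRingEnd ℂ) a)⁻¹ * a⁻¹ * ((starRingEnd ℂ) a * a) = 1 := by
    field_simp
  have P2 : IsIsometricColligation β (α⁻¹ • rowN B2) (colN C2) (matR D2) := by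
    have f1 : (starRingEnd ℂ) β * β + (inner ℂ (colN C2 1) (colN C2 1) : ℂ) = 1 := by
      linear_combination F1 + hβ2c
    have f2 : ∀ g : PiLp 2 N, (starRingEnd ℂ) β * (α⁻¹ * rowN B2 g)
        + (inner ℂ (colN C2 1) (matR D2 g) : ℂ) = 0 := fun g => by
      rw [hαβ, inv_div]
      linear_combination F5 g + (a⁻¹ * rowN B2 g) * hβ2c
        + ((starRingEnd ℂ) a * rowN B2 g) * hA
    have f3 : ∀ g : PiLp 2 N, ((starRingEnd ℂ) α)⁻¹ * (starRingEnd ℂ) (rowN B2 g) * β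
        + (inner ℂ (matR D2 g) (colN C2 1) : ℂ) = 0 := fun g => by
      rw [hαβ, map_div₀, inv_div]
      linear_combination F6 g + (((starRingEnd ℂ) a)⁻¹ * (starRingEnd ℂ) (rowN B2 g)) * hβ2c
        + (a * (starRingEnd ℂ) (rowN B2 g)) * hA'
    have f4 : ∀ g g' : PiLp 2 N, ((starRingEnd ℂ) α)⁻¹ * (starRingEnd ℂ) (rowN B2 g)
          * (α⁻¹ * rowN B2 g') + (inner ℂ (matR D2 g) (matR D2 g') : ℂ)
        = (inner ℂ g g' : ℂ) := fun g g' => by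
      simp only [hαβ, map_div₀, inv_div]
      linear_combination F7 g g'
        + (((starRingEnd ℂ) a)⁻¹ * a⁻¹ * (starRingEnd ℂ) (rowN B2 g) * rowN B2 g') * hβ2c
        + ((starRingEnd ℂ) (rowN B2 g) * rowN B2 g') * hAA
    intro z w h k
    simp only [ContinuousLinearMap.smul_apply, smul_eq_mul, inner_add_left, inner_add_right,
      map_add, map_mul, map_inv₀]
    rw [g3' z w, g1' z k, g2' h w]
    linear_combination ((starRingEnd ℂ) z * w) * f1 + (starRingEnd ℂ) z * f2 k
      + w * f3 h + f4 h k
  refine ⟨P1, P2, ?_⟩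
  intro z hz
  have hz' : ∀ i, ‖z i‖ < 1 := hz
  haveI : CompleteSpace (PiLp 2 M) := inferInstance
  haveI : CompleteSpace (PiLp 2 N) := inferInstance
  haveI : CompleteSpace (PiLp 2 fun i => WithLp 2 (M i × N i)) :=
    inferInstance
  have hD1n : ∀ h, ‖matR D1 h‖ ≤ ‖h‖ := contraction_of_colligation P1
  have hD2n : ∀ h, ‖matR D2 h‖ ≤ ‖h‖ := contraction_of_colligation P2
  have hDbn : ∀ h, ‖matR (fun i j =>
      blockD (D1 i j) (a⁻¹ • ((C1 i) ∘L (B2 j))) 0 (D2 i j)) h‖ ≤ ‖h‖ :=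
    contraction_of_colligation hV
  have hU1 := isUnit_one_sub_diag_comp z hz' (matR D1) hD1n
  have hU2 := isUnit_one_sub_diag_comp z hz' (matR D2) hD2n
  have hU := isUnit_one_sub_diag_comp z hz'
    (matR fun i j => blockD (D1 i j) (a⁻¹ • ((C1 i) ∘L (B2 j))) 0 (D2 i j)) hDbn
  set c1 : PiLp 2 M :=
    Ring.inverse (1 - (diagN z).comp (matR D1)) (diagN z (colN C1 1)) with hc1def
  set c2 : PiLp 2 N :=
    Ring.inverse (1 - (diagN z).comp (matR D2)) (diagN z (colN C2 1)) with hc2def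
  have hc1 : c1 - diagN z (matR D1 c1) = diagN z (colN C1 1) := by
    have h0 := DFunLike.congr_fun (Ring.mul_inverse_cancel _ hU1) (diagN z (colN C1 1))
    rw [ContinuousLinearMap.mul_apply, ContinuousLinearMap.one_apply, ← hc1def,
      ContinuousLinearMap.sub_apply, ContinuousLinearMap.one_apply,
      ContinuousLinearMap.comp_apply] at h0
    exact h0
  have hc2 : c2 - diagN z (matR D2 c2) = diagN z (colN C2 1) := by
    have h0 := DFunLike.congr_fun (Ring.mul_inverse_cancel _ hU2) (diagN z (colN C2 1))
    rw [ContinuousLinearMap.mul_apply, ContinuousLinearMap.one_apply, ← hc2def,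
      ContinuousLinearMap.sub_apply, ContinuousLinearMap.one_apply,
      ContinuousLinearMap.comp_apply] at h0
    exact h0
  set q : ℂ := rowN B2 c2 with hqdef
  set p : ℂ := rowN B1 c1 with hpdef
  set v : PiLp 2 (fun i => WithLp 2 (M i × N i)) := glue ((1 + a⁻¹ * q) • c1) c2 with hvdef
  have hkey : (1 - (diagN z).comp (matR fun i j =>
      blockD (D1 i j) (a⁻¹ • ((C1 i) ∘L (B2 j))) 0 (D2 i j))) v
      = diagN z (colN (fun i => colC (C1 i) (C2 i)) 1) := by
    have hMcomp : (1 + a⁻¹ * q) • c1 - ((1 + a⁻¹ * q) • diagN z (matR D1 c1)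
          + (a⁻¹ * rowN B2 c2) • diagN z (colN C1 1)) = diagN z (colN C1 1) :=
      calc (1 + a⁻¹ * q) • c1 - ((1 + a⁻¹ * q) • diagN z (matR D1 c1)
            + (a⁻¹ * rowN B2 c2) • diagN z (colN C1 1))
          = (1 + a⁻¹ * q) • (c1 - diagN z (matR D1 c1))
            - (a⁻¹ * q) • diagN z (colN C1 1) := by rw [← hqdef]; module
        _ = diagN z (colN C1 1) := by rw [hc1]; module
    rw [ContinuousLinearMap.sub_apply, ContinuousLinearMap.one_apply,
      ContinuousLinearMap.comp_apply, hvdef, hDbg, diagN_glue, glue_sub, hCcg, diagN_glue,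
      map_add (diagN z), map_smul (matR D1), map_smul (diagN z), map_smul (diagN z),
      hc2, hMcomp]
  have hv' : Ring.inverse (1 - (diagN z).comp (matR fun i j =>
      blockD (D1 i j) (a⁻¹ • ((C1 i) ∘L (B2 j))) 0 (D2 i j)))
      (diagN z (colN (fun i => colC (C1 i) (C2 i)) 1)) = v := by
    rw [← hkey, ← ContinuousLinearMap.mul_apply, Ring.inverse_mul_cancel _ hU,
      ContinuousLinearMap.one_apply]
  have ht : transferN a (rowN fun i => rowB (B1 i) (B2 i))
      (colN fun i => colC (C1 i) (C2 i))
      (matR fun i j => blockD (D1 i j) (a⁻¹ • ((C1 i) ∘L (B2 j))) 0 (D2 i j)) z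
      = a + ((1 + a⁻¹ * q) * p + q) := by
    unfold transferN
    rw [hv', hvdef, rowN_rowB_glue, map_smul (rowN B1), ← hpdef, ← hqdef, smul_eq_mul]
  have ht1 : transferN α (rowN B1) (β⁻¹ • colN C1) (matR D1) z = α + β⁻¹ * p := by
    unfold transferN
    rw [ContinuousLinearMap.smul_apply, map_smul (diagN z), map_smul, map_smul (rowN B1),
      ← hc1def, ← hpdef, smul_eq_mul]
  have ht2 : transferN β (α⁻¹ • rowN B2) (colN C2) (matR D2) z = β + α⁻¹ * q := by
    unfold transferN
    rw [ContinuousLinearMap.smul_apply, ← hc2def, ← hqdef, smul_eq_mul]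
  rw [ht, ht1, ht2, hαβ]
  have hA2 : (a / β)⁻¹ = β / a := inv_div a β
  rw [hA2]
  field_simp
  ring
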